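/- Let A be a unital C*-algebra and let τ be a faithful tracial state on A. Let r > 0, let (x_n) be a sequence of self-adjoint elements of A and x ∈ A self-adjoint with ‖x_n‖ ≤ r for all n, ‖x‖ ≤ r, and τ((x_n − x)*(x_n − x)) → 0. Let λ₁, λ₂, λ₃ ∈ σ(x) be pairwise distinct and let ε > 0. Then there exists N such that for all n ≥ N and each i ∈ {1,2,3}, σ(x_n) ∩ (λᵢ − ε, λᵢ + ε) ≠ ∅. In particular, if ε < (1/2)·min_{i≠j} |λᵢ − λⱼ|, then for all n ≥ N the spectrum σ(x_n) contains at least three distinct points. -/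

import Mathlib

/-!
A tracial positive functional `τ` makes `a ↦ τ(a⋆a)^(1/2)` the norm of its GNS pre-Hilbert space,
in which left multiplication and, by traciality, right multiplication by `a` are bounded by `‖a‖`.
Hence polynomials are Lipschitz for this 2-norm on norm-bounded sets, and approximating a continuous
`g` uniformly on `[-r, r]` by polynomials shows that `xₙ → x` in 2-norm forces `g(xₙ) → g(x)` in
2-norm. For a bump `g` supported in `(λ - ε, λ + ε)` with `g λ ≠ 0`, faithfulness gives
`‖g(x)‖₂ > 0`, so eventually `g(xₙ) ≠ 0`, i.e. `σ(xₙ)` meets the interval.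
-/

open Filter Metric Polynomial Set Topology
open scoped ComplexOrder

section ContinuousFunctionalCalculus

variable {R A : Type*} {p : A → Prop} [CommSemiring R] [StarRing R] [MetricSpace R]
  [IsTopologicalSemiring R] [ContinuousStar R] [TopologicalSpace A] [Ring A] [StarRing A]
  [Algebra R A] [ContinuousFunctionalCalculus R A p]

lemma cfc_eq_zero_iff {f : R → R} {a : A} (ha : p a) (hf : ContinuousOn f (spectrum R a)) :
    cfc f a = 0 ↔ ∀ t ∈ spectrum R a, f t = 0 := by
  rw [← cfc_zero R a, cfc_eq_cfc_iff_eqOn]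
  rfl

end ContinuousFunctionalCalculus

lemma norm_cfc_sub_aeval_le {A : Type*} [CStarAlgebra A] {f : ℝ → ℝ} {p : ℝ[X]} {r δ : ℝ}
    (hfp : ∀ t ∈ Icc (-r) r, |eval t p - f t| ≤ δ) {a : A} (ha : IsSelfAdjoint a)
    (har : ‖a‖ ≤ r) (hf : ContinuousOn f (spectrum ℝ a)) :
    ‖cfc f a - aeval a p‖ ≤ δ := by
  have hr : 0 ≤ r := (norm_nonneg a).trans har
  have hδ : 0 ≤ δ := (abs_nonneg _).trans (hfp 0 ⟨by linarith, hr⟩)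
  nontriviality A using hδ
  rw [← cfc_polynomial p a, ← cfc_sub f _ a]
  refine norm_cfc_le hδ fun t ht => ?_
  rw [Real.norm_eq_abs, abs_sub_comm]
  exact hfp t (abs_le.mp ((spectrum.norm_le_norm_of_mem ht).trans har))

namespace PositiveLinearMap

section NonUnital

variable {A : Type*} [NonUnitalCStarAlgebra A] [PartialOrder A] [StarOrderedRing A]
  (φ : A →ₚ[ℂ] ℂ)

lemma norm_toPreGNS_sq (a : A) : (‖φ.toPreGNS a‖ : ℂ) ^ 2 = φ (star a * a) :=
  φ.preGNS_norm_sq _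

lemma norm_toPreGNS_mul_le_left (a b : A) :
    ‖φ.toPreGNS (a * b)‖ ≤ ‖a‖ * ‖φ.toPreGNS b‖ :=
  (φ.leftMulMapPreGNS a).le_of_opNorm_le
    (LinearMap.mkContinuous_norm_le _ (norm_nonneg a) _) _

lemma norm_toPreGNS_star (hφ : ∀ a b, φ (a * b) = φ (b * a)) (a : A) :
    ‖φ.toPreGNS (star a)‖ = ‖φ.toPreGNS a‖ := by
  rw [preGNS_norm_def, preGNS_norm_def, ofPreGNS_toPreGNS, ofPreGNS_toPreGNS, star_star, hφ]

lemma norm_toPreGNS_mul_le_right (hφ : ∀ a b, φ (a * b) = φ (b * a)) (a b : A) :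
    ‖φ.toPreGNS (a * b)‖ ≤ ‖b‖ * ‖φ.toPreGNS a‖ := by
  rw [← φ.norm_toPreGNS_star hφ (a * b), star_mul, ← norm_star b,
    ← φ.norm_toPreGNS_star hφ a]
  exact φ.norm_toPreGNS_mul_le_left _ _

lemma norm_toPreGNS_eq_zero_iff (hφ : ∀ a, φ (star a * a) = 0 → a = 0) {a : A} :
    ‖φ.toPreGNS a‖ = 0 ↔ a = 0 := by
  refine ⟨fun h => hφ a ?_, fun h => by simp [h]⟩
  simpa [h] using (φ.norm_toPreGNS_sq a).symm

lemma tendsto_toPreGNS_of_tendsto_apply_star_mul_self {ι : Type*} {l : Filter ι} {x : ι → A}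
    {a : A} (h : Tendsto (fun i => φ (star (x i - a) * (x i - a))) l (𝓝 0)) :
    Tendsto (fun i => φ.toPreGNS (x i)) l (𝓝 (φ.toPreGNS a)) := by
  rw [tendsto_iff_norm_sub_tendsto_zero]
  have hsq : Tendsto (fun i => ‖φ.toPreGNS (x i - a)‖ ^ 2) l (𝓝 0) := by
    have hnorm : Tendsto (fun i => ‖φ (star (x i - a) * (x i - a))‖) l (𝓝 0) := by
      simpa only [norm_zero] using h.norm
    refine hnorm.congr fun i => ?_
    rw [← φ.norm_toPreGNS_sq, norm_pow, Complex.norm_real, norm_norm]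
  simpa only [Function.comp_def, Real.sqrt_sq (norm_nonneg _), Real.sqrt_zero, map_sub]
    using (Real.continuous_sqrt.tendsto 0).comp hsq

end NonUnital

variable {A : Type*} [CStarAlgebra A] [PartialOrder A] [StarOrderedRing A]
  (φ : A →ₚ[ℂ] ℂ)

lemma norm_toPreGNS_le (a : A) : ‖φ.toPreGNS a‖ ≤ ‖a‖ * ‖φ.toPreGNS 1‖ := by
  simpa using φ.norm_toPreGNS_mul_le_left a 1

lemma norm_toPreGNS_pow_succ_sub_le (hφ : ∀ a b, φ (a * b) = φ (b * a)) {r : ℝ} {y z : A}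
    (hy : ‖y‖ ≤ r) (hz : ‖z‖ ≤ r) (n : ℕ) :
    ‖φ.toPreGNS (y ^ (n + 1) - z ^ (n + 1))‖ ≤ (n + 1) * r ^ n * ‖φ.toPreGNS (y - z)‖ := by
  induction n with
  | zero => simp
  | succ n ih =>
    have hzn : ‖z ^ (n + 1)‖ ≤ r ^ (n + 1) :=
      (norm_pow_le' z n.succ_pos).trans (pow_le_pow_left₀ (norm_nonneg z) hz _)
    have hsplit : y ^ (n + 1 + 1) - z ^ (n + 1 + 1)
        = y * (y ^ (n + 1) - z ^ (n + 1)) + (y - z) * z ^ (n + 1) := by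
      rw [pow_succ' y, pow_succ' z, mul_sub, sub_mul]; abel
    have hr : 0 ≤ r := (norm_nonneg y).trans hy
    calc ‖φ.toPreGNS (y ^ (n + 1 + 1) - z ^ (n + 1 + 1))‖
        ≤ ‖y‖ * ‖φ.toPreGNS (y ^ (n + 1) - z ^ (n + 1))‖
          + ‖z ^ (n + 1)‖ * ‖φ.toPreGNS (y - z)‖ := by
          rw [hsplit, map_add]
          exact (norm_add_le _ _).trans (add_le_add (φ.norm_toPreGNS_mul_le_left _ _)
            (φ.norm_toPreGNS_mul_le_right hφ _ _))
      _ ≤ r * ((n + 1) * r ^ n * ‖φ.toPreGNS (y - z)‖) + r ^ (n + 1) * ‖φ.toPreGNS (y - z)‖ := by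
          gcongr
      _ = (↑(n + 1) + 1) * r ^ (n + 1) * ‖φ.toPreGNS (y - z)‖ := by push_cast; ring

lemma exists_norm_toPreGNS_aeval_sub_le (hφ : ∀ a b, φ (a * b) = φ (b * a)) (r : ℝ)
    (p : ℝ[X]) : ∃ C, ∀ y z : A, ‖y‖ ≤ r → ‖z‖ ≤ r →
      ‖φ.toPreGNS (aeval y p - aeval z p)‖ ≤ C * ‖φ.toPreGNS (y - z)‖ := by
  induction p using Polynomial.induction_on' with
  | add p q hp hq =>
    obtain ⟨Cp, hp⟩ := hp
    obtain ⟨Cq, hq⟩ := hq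
    refine ⟨Cp + Cq, fun y z hy hz => ?_⟩
    rw [map_add, map_add, add_sub_add_comm, map_add, add_mul]
    exact (norm_add_le _ _).trans (add_le_add (hp y z hy hz) (hq y z hy hz))
  | monomial n c =>
    cases n with
    | zero => exact ⟨0, fun y z _ _ => by simp⟩
    | succ n =>
      refine ⟨‖algebraMap ℝ A c‖ * ((n + 1) * r ^ n), fun y z hy hz => ?_⟩
      rw [aeval_monomial, aeval_monomial, ← mul_sub, mul_assoc]
      exact (φ.norm_toPreGNS_mul_le_left _ _).trans
        (mul_le_mul_of_nonneg_left (φ.norm_toPreGNS_pow_succ_sub_le hφ hy hz n) (norm_nonneg _))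

lemma exists_norm_toPreGNS_cfc_sub_le (hφ : ∀ a b, φ (a * b) = φ (b * a)) {f : ℝ → ℝ}
    (hf : Continuous f) (r : ℝ) {η : ℝ} (hη : 0 < η) :
    ∃ C, ∀ y z : A, IsSelfAdjoint y → IsSelfAdjoint z → ‖y‖ ≤ r → ‖z‖ ≤ r →
      ‖φ.toPreGNS (cfc f y - cfc f z)‖ ≤ η + C * ‖φ.toPreGNS (y - z)‖ := by
  set K := ‖φ.toPreGNS 1‖
  set δ := η / (2 * (K + 1))
  have hδ : 0 < δ := by positivity
  have hKδ : K * δ + K * δ ≤ η := by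
    have : K * δ + K * δ = η * (K / (K + 1)) := by simp only [δ]; field_simp; ring
    rw [this]
    exact mul_le_of_le_one_right hη.le ((div_le_one (by positivity)).2 (by linarith))
  obtain ⟨p, hp⟩ := exists_polynomial_near_of_continuousOn (-r) r f hf.continuousOn δ hδ
  obtain ⟨C, hC⟩ := φ.exists_norm_toPreGNS_aeval_sub_le hφ r p
  have happrox : ∀ w : A, IsSelfAdjoint w → ‖w‖ ≤ r →
      ‖φ.toPreGNS (cfc f w - aeval w p)‖ ≤ K * δ := fun w hw hwr => by
    refine (φ.norm_toPreGNS_le _).trans ?_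
    rw [mul_comm]
    gcongr
    exact norm_cfc_sub_aeval_le (fun t ht => (hp t ht).le) hw hwr hf.continuousOn
  refine ⟨C, fun y z hy hz hyr hzr => ?_⟩
  have hsplit : cfc f y - cfc f z
      = (cfc f y - aeval y p) + (aeval y p - aeval z p) - (cfc f z - aeval z p) := by abel
  calc ‖φ.toPreGNS (cfc f y - cfc f z)‖
      ≤ ‖φ.toPreGNS (cfc f y - aeval y p)‖ + ‖φ.toPreGNS (aeval y p - aeval z p)‖
        + ‖φ.toPreGNS (cfc f z - aeval z p)‖ := by
        rw [hsplit, map_sub, map_add]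
        exact norm_sub_le_of_le (norm_add_le _ _) le_rfl
    _ ≤ K * δ + C * ‖φ.toPreGNS (y - z)‖ + K * δ := by
        gcongr
        exacts [happrox y hy hyr, hC y z hyr hzr, happrox z hz hzr]
    _ ≤ η + C * ‖φ.toPreGNS (y - z)‖ := by linarith

lemma tendsto_toPreGNS_cfc (hφ : ∀ a b, φ (a * b) = φ (b * a)) {f : ℝ → ℝ}
    (hf : Continuous f) {ι : Type*} {l : Filter ι} {x : ι → A} {a : A} {r : ℝ}
    (hx : ∀ i, IsSelfAdjoint (x i)) (hxr : ∀ i, ‖x i‖ ≤ r) (ha : IsSelfAdjoint a)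
    (har : ‖a‖ ≤ r) (h : Tendsto (fun i => φ.toPreGNS (x i)) l (𝓝 (φ.toPreGNS a))) :
    Tendsto (fun i => φ.toPreGNS (cfc f (x i))) l (𝓝 (φ.toPreGNS (cfc f a))) := by
  rw [tendsto_iff_norm_sub_tendsto_zero] at h
  refine Metric.tendsto_nhds.2 fun η hη => ?_
  obtain ⟨C, hC⟩ := φ.exists_norm_toPreGNS_cfc_sub_le hφ hf r (half_pos hη)
  have hsmall : Tendsto (fun i => C * ‖φ.toPreGNS (x i) - φ.toPreGNS a‖) l (𝓝 0) := by
    simpa using h.const_mul C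
  filter_upwards [hsmall.eventually_lt_const (half_pos hη)] with i hi
  have := hC (x i) a (hx i) ha (hxr i) har
  rw [map_sub, map_sub] at this
  rw [dist_eq_norm]
  linarith

lemma eventually_spectrum_inter_ball_nonempty (hφ : ∀ a b, φ (a * b) = φ (b * a))
    (hfaithful : ∀ a, φ (star a * a) = 0 → a = 0) {ι : Type*} {l : Filter ι} {x : ι → A}
    {a : A} {r : ℝ} (hx : ∀ i, IsSelfAdjoint (x i)) (hxr : ∀ i, ‖x i‖ ≤ r)
    (ha : IsSelfAdjoint a) (har : ‖a‖ ≤ r)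
    (h : Tendsto (fun i => φ.toPreGNS (x i)) l (𝓝 (φ.toPreGNS a)))
    {t₀ : ℝ} (ht₀ : t₀ ∈ spectrum ℝ a) {ε : ℝ} (hε : 0 < ε) :
    ∀ᶠ i in l, (spectrum ℝ (x i) ∩ ball t₀ ε).Nonempty := by
  set g : ℝ → ℝ := fun t => max 0 (ε - dist t t₀)
  have hg : Continuous g := by fun_prop
  have hg_supp : ∀ t, g t ≠ 0 → t ∈ ball t₀ ε := fun t ht => by
    by_contra hout
    exact ht (max_eq_left (by simpa using hout))
  have hlim : 0 < ‖φ.toPreGNS (cfc g a)‖ := by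
    refine (norm_nonneg _).lt_of_ne' fun h0 => ?_
    have := ((cfc_eq_zero_iff ha hg.continuousOn).1
      ((φ.norm_toPreGNS_eq_zero_iff hfaithful).1 h0)) t₀ ht₀
    simp [g] at this
    linarith
  filter_upwards [(φ.tendsto_toPreGNS_cfc hφ hg hx hxr ha har h).norm.eventually_const_lt hlim]
    with i hi
  have hne : cfc g (x i) ≠ 0 := fun h0 => hi.ne' (by simp [h0])
  rw [Ne, cfc_eq_zero_iff (hx i) hg.continuousOn] at hne
  push Not at hne
  obtain ⟨t, ht, hgt⟩ := hne
  exact ⟨t, ht, hg_supp t hgt⟩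

end PositiveLinearMap

theorem spectrum_eventually_meets_intervals_of_tendsto_twoNorm_general
    {A : Type*} [CStarAlgebra A]
    (τ : A →ₗ[ℂ] ℂ)
    (hpos : ∀ a : A, 0 ≤ τ (star a * a))
    (htr : ∀ a b : A, τ (a * b) = τ (b * a))
    (hfaithful : ∀ a : A, τ (star a * a) = 0 → a = 0)
    (r : ℝ)
    (x : ℕ → A) (hx : ∀ n, IsSelfAdjoint (x n)) (hxr : ∀ n, ‖x n‖ ≤ r)
    (xlim : A) (hxlim : IsSelfAdjoint xlim) (hxlimr : ‖xlim‖ ≤ r)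
    (hconv : Tendsto (fun n => τ (star (x n - xlim) * (x n - xlim)))
      atTop (nhds 0))
    (l1 l2 l3 : ℝ) (hl1 : l1 ∈ spectrum ℝ xlim) (hl2 : l2 ∈ spectrum ℝ xlim)
    (hl3 : l3 ∈ spectrum ℝ xlim)
    (ε : ℝ) (hε : 0 < ε) :
    ∃ N : ℕ, ∀ n ≥ N,
      ((spectrum ℝ (x n) ∩ Set.Ioo (l1 - ε) (l1 + ε)).Nonempty ∧
       (spectrum ℝ (x n) ∩ Set.Ioo (l2 - ε) (l2 + ε)).Nonempty ∧
       (spectrum ℝ (x n) ∩ Set.Ioo (l3 - ε) (l3 + ε)).Nonempty) ∧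
      (ε < (1/2) * min (min |l1 - l2| |l1 - l3|) |l2 - l3| →
        ∃ a ∈ spectrum ℝ (x n), ∃ b ∈ spectrum ℝ (x n), ∃ c ∈ spectrum ℝ (x n),
          a ≠ b ∧ a ≠ c ∧ b ≠ c) := by
  let _ : PartialOrder A := CStarAlgebra.spectralOrder A
  have _ : StarOrderedRing A := CStarAlgebra.spectralOrderedRing A
  let φ : A →ₚ[ℂ] ℂ := .mk₀ τ fun c hc => by
    obtain ⟨s, rfl⟩ := CStarAlgebra.nonneg_iff_eq_star_mul_self.mp hc
    exact hpos s
  have meets : ∀ l ∈ spectrum ℝ xlim, ∀ᶠ n in atTop, (spectrum ℝ (x n) ∩ ball l ε).Nonempty :=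
    fun l hl => φ.eventually_spectrum_inter_ball_nonempty htr hfaithful hx hxr hxlim hxlimr
      (φ.tendsto_toPreGNS_of_tendsto_apply_star_mul_self hconv) hl hε
  obtain ⟨N, hN⟩ := eventually_atTop.1 ((meets l1 hl1).and ((meets l2 hl2).and (meets l3 hl3)))
  simp only [← Real.ball_eq_Ioo]
  refine ⟨N, fun n hn => ⟨hN n hn, fun hsep => ?_⟩⟩
  obtain ⟨⟨a, ha, ha'⟩, ⟨b, hb, hb'⟩, ⟨c, hc, hc'⟩⟩ := hN n hn
  have hsep' : ε + ε < min (min (dist l1 l2) (dist l1 l3)) (dist l2 l3) := by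
    simp only [Real.dist_eq]; linarith
  simp only [lt_min_iff] at hsep'
  obtain ⟨⟨h12, h13⟩, h23⟩ := hsep'
  exact ⟨a, ha, b, hb, c, hc, (ball_disjoint_ball h12.le).ne_of_mem ha' hb',
    (ball_disjoint_ball h13.le).ne_of_mem ha' hc', (ball_disjoint_ball h23.le).ne_of_mem hb' hc'⟩

/-- If self-adjoint elements `x n` converge to `x` in the 2-norm of a faithful
tracial state, with uniform norm bound, and `λ₁, λ₂, λ₃` are distinct points of
the spectrum of `x`, then eventually the spectrum of `x n` meets each interval
`(λᵢ − ε, λᵢ + ε)`; in particular, if `ε < (1/2)·min_{i≠j}|λᵢ−λⱼ|`, then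
`σ(x n)` eventually has at least three distinct points. -/
theorem spectrum_eventually_meets_intervals_of_tendsto_twoNorm
    {A : Type*} [CStarAlgebra A]
    (τ : A →ₗ[ℂ] ℂ) (hτ1 : τ 1 = 1)
    (hpos : ∀ a : A, 0 ≤ τ (star a * a))
    (htr : ∀ a b : A, τ (a * b) = τ (b * a))
    (hfaithful : ∀ a : A, τ (star a * a) = 0 → a = 0)
    (r : ℝ) (hr : 0 < r)
    (x : ℕ → A) (hx : ∀ n, IsSelfAdjoint (x n)) (hxr : ∀ n, ‖x n‖ ≤ r)
    (xlim : A) (hxlim : IsSelfAdjoint xlim) (hxlimr : ‖xlim‖ ≤ r)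
    (hconv : Tendsto (fun n => τ (star (x n - xlim) * (x n - xlim)))
      atTop (nhds 0))
    (l1 l2 l3 : ℝ) (hl1 : l1 ∈ spectrum ℝ xlim) (hl2 : l2 ∈ spectrum ℝ xlim)
    (hl3 : l3 ∈ spectrum ℝ xlim)
    (h12 : l1 ≠ l2) (h13 : l1 ≠ l3) (h23 : l2 ≠ l3)
    (ε : ℝ) (hε : 0 < ε) :
    ∃ N : ℕ, ∀ n ≥ N,
      ((spectrum ℝ (x n) ∩ Set.Ioo (l1 - ε) (l1 + ε)).Nonempty ∧
       (spectrum ℝ (x n) ∩ Set.Ioo (l2 - ε) (l2 + ε)).Nonempty ∧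
       (spectrum ℝ (x n) ∩ Set.Ioo (l3 - ε) (l3 + ε)).Nonempty) ∧
      (ε < (1/2) * min (min |l1 - l2| |l1 - l3|) |l2 - l3| →
        ∃ a ∈ spectrum ℝ (x n), ∃ b ∈ spectrum ℝ (x n), ∃ c ∈ spectrum ℝ (x n),
          a ≠ b ∧ a ≠ c ∧ b ≠ c) :=
  spectrum_eventually_meets_intervals_of_tendsto_twoNorm_general τ hpos htr hfaithful r x hx hxr
    xlim hxlim hxlimr hconv l1 l2 l3 hl1 hl2 hl3 ε hε
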